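/- arXiv:1906.09989 — 2 statements merged into one kernel-verified Lean document; each statement's English description precedes it below -/
import Mathlib

section
/- Let X₁, …, X_k be smooth pointwise linearly independent vector fields on an open set U ⊆ ℝᵐ spanning an involutive distribution D (i.e. each Lie bracket [X_i, X_j] is a pointwise linear combination of X₁,…,X_k). Suppose the matrix (α_{ij})_{i,j=1}^k formed by the first k coordinate components of the X_i is invertible at every point of U, with smooth inverse (β_{ij}). Then the vector fields Y_i := Σ_{j=1}^k β_{ij} X_j span the same distribution D at every point and pairwise commute: [Y_i, Y_j] = 0 for all i, j. -/
/-- The Lie bracket of two vector fields on `ℝᵐ`, viewed as `ℝᵐ`-valued maps: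
`[X,Y](p) = DY(p)·X(p) − DX(p)·Y(p)`. -/
noncomputable def lieBracketVF {m : ℕ} (X Y : (Fin m → ℝ) → (Fin m → ℝ)) :
    (Fin m → ℝ) → (Fin m → ℝ) :=
  fun p => fderiv ℝ Y p (X p) - fderiv ℝ X p (Y p)

/-- If `X₁, …, X_k` are smooth pointwise linearly independent vector fields
on an open set `U ⊆ ℝᵐ` spanning an involutive distribution, and the `k × k` matrix `α` of
their first `k` coordinate components is invertible on `U` with smooth inverse `β`, then the
vector fields `Y_i := Σ_j β_{ij} X_j` span the same distribution at every point of `U` and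
pairwise commute there. -/
theorem normalized_frame_commutes
    {m k : ℕ} (hk : k ≤ m) (U : Set (Fin m → ℝ)) (hU : IsOpen U)
    (X : Fin k → (Fin m → ℝ) → (Fin m → ℝ))
    (hX : ∀ i, ContDiffOn ℝ (⊤ : ℕ∞) (X i) U)
    (hind : ∀ p ∈ U, LinearIndependent ℝ (fun i => X i p))
    (hinvol : ∀ i j, ∀ p ∈ U, lieBracketVF (X i) (X j) p ∈
      Submodule.span ℝ (Set.range fun l => X l p))
    (β : (Fin m → ℝ) → Fin k → Fin k → ℝ)
    (hβ : ∀ i j, ContDiffOn ℝ (⊤ : ℕ∞) (fun p => β p i j) U)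
    (hβα : ∀ p ∈ U,
      (Matrix.of (β p)) * (Matrix.of fun i j => X i p (Fin.castLE hk j)) = 1)
    (hαβ : ∀ p ∈ U,
      (Matrix.of fun i j => X i p (Fin.castLE hk j)) * (Matrix.of (β p)) = 1)
    (Y : Fin k → (Fin m → ℝ) → (Fin m → ℝ))
    (hY : ∀ i p, Y i p = ∑ j, β p i j • X j p) :
    ∀ p ∈ U,
      (Submodule.span ℝ (Set.range fun i => Y i p) =
        Submodule.span ℝ (Set.range fun i => X i p)) ∧
      ∀ i j, lieBracketVF (Y i) (Y j) p = 0 := by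
  intro p hp
  have hmem : U ∈ nhds p := hU.mem_nhds hp
  have hXd : ∀ j, DifferentiableAt ℝ (X j) p := fun j =>
    ((hX j).differentiableOn (by simp)).differentiableAt hmem
  have hβd : ∀ i j, DifferentiableAt ℝ (fun q => β q i j) p := fun i j =>
    ((hβ i j).differentiableOn (by simp)).differentiableAt hmem
  -- derivative of Y i
  have hYd : ∀ i, HasFDerivAt (Y i)
      (∑ j, (β p i j • fderiv ℝ (X j) p +
        (fderiv ℝ (fun q => β q i j) p).smulRight (X j p))) p := by
    intro i
    have hYe : Y i = fun q => ∑ j, β q i j • X j q := funext (hY i)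
    rw [hYe]
    exact HasFDerivAt.fun_sum fun j _ =>
      ((hβd i j).hasFDerivAt.smul (hXd j).hasFDerivAt)
  have hYdiff : ∀ i, DifferentiableAt ℝ (Y i) p := fun i => (hYd i).differentiableAt
  -- span equality
  have hYmem : ∀ i, Y i p ∈ Submodule.span ℝ (Set.range fun l => X l p) := by
    intro i
    rw [hY]
    exact Submodule.sum_mem _ fun j _ =>
      Submodule.smul_mem _ _ (Submodule.subset_span ⟨j, rfl⟩)
  have hspan : Submodule.span ℝ (Set.range fun i => Y i p) =
      Submodule.span ℝ (Set.range fun i => X i p) := by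
    apply le_antisymm
    · rw [Submodule.span_le]
      rintro _ ⟨i, rfl⟩
      exact hYmem i
    · rw [Submodule.span_le]
      rintro _ ⟨i, rfl⟩
      have h2 : ∀ l, (∑ j, X i p (Fin.castLE hk j) * β p j l) = if i = l then (1:ℝ) else 0 := by
        intro l
        simpa [Matrix.mul_apply, Matrix.one_apply] using
          congrFun (congrFun (hαβ p hp) i) l
      have hXi : X i p = ∑ j, X i p (Fin.castLE hk j) • Y j p := by
        calc X i p = ∑ l, (if i = l then (1:ℝ) else 0) • X l p := by simp
          _ = ∑ l, (∑ j, X i p (Fin.castLE hk j) * β p j l) • X l p := by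
              simp only [h2]
          _ = ∑ j, X i p (Fin.castLE hk j) • Y j p := by
              simp only [hY, Finset.smul_sum, smul_smul, Finset.sum_smul]
              rw [Finset.sum_comm]
      show X i p ∈ _
      rw [hXi]
      exact Submodule.sum_mem _ fun j _ =>
        Submodule.smul_mem _ _ (Submodule.subset_span ⟨j, rfl⟩)
  refine ⟨hspan, ?_⟩
  intro a b
  -- first k components of Y i are constant on U
  have hconst : ∀ i (l : Fin k), ∀ q ∈ U,
      Y i q (Fin.castLE hk l) = (1 : Matrix (Fin k) (Fin k) ℝ) i l := by
    intro i l q hq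
    rw [hY]
    have h1 := congrFun (congrFun (hβα q hq) i) l
    calc (∑ j, β q i j • X j q) (Fin.castLE hk l)
        = ∑ j, β q i j * X j q (Fin.castLE hk l) := by
          simp [Finset.sum_apply]
      _ = (Matrix.of (β q) * Matrix.of fun i j => X i q (Fin.castLE hk j)) i l := by
          simp [Matrix.mul_apply]
      _ = (1 : Matrix (Fin k) (Fin k) ℝ) i l := h1
  have hproj : ∀ i (l : Fin k) (v : Fin m → ℝ),
      fderiv ℝ (Y i) p v (Fin.castLE hk l) = 0 := by
    intro i l v
    have hco := (ContinuousLinearMap.proj (R := ℝ) (φ := fun _ : Fin m => ℝ)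
      (Fin.castLE hk l)).hasFDerivAt.comp p (hYdiff i).hasFDerivAt
    simp only [Function.comp_def, ContinuousLinearMap.proj_apply] at hco
    have heq : fderiv ℝ (fun q => Y i q (Fin.castLE hk l)) p = 0 := by
      have hev : (fun q => Y i q (Fin.castLE hk l)) =ᶠ[nhds p]
          fun _ => (1 : Matrix (Fin k) (Fin k) ℝ) i l :=
        Filter.eventuallyEq_of_mem hmem (fun q hq => hconst i l q hq)
      rw [hev.fderiv_eq]
      exact fderiv_const_apply _
    have h3 := hco.fderiv
    rw [heq] at h3
    simpa using (congrArg (fun (L : (Fin m → ℝ) →L[ℝ] ℝ) => L v) h3).symm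
  -- components of the bracket vanish
  have hzero : ∀ l : Fin k, lieBracketVF (Y a) (Y b) p (Fin.castLE hk l) = 0 := by
    intro l
    show (fderiv ℝ (Y b) p (Y a p) - fderiv ℝ (Y a) p (Y b p)) (Fin.castLE hk l) = 0
    rw [Pi.sub_apply, hproj b l (Y a p), hproj a l (Y b p), sub_zero]
  -- bracket lies in span of X's
  have hbr : lieBracketVF (Y a) (Y b) p
      = (∑ i, ∑ j, (β p a i * β p b j) • lieBracketVF (X i) (X j) p)
        + ((∑ j, (fderiv ℝ (fun q => β q b j) p (Y a p)) • X j p)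
          - (∑ j, (fderiv ℝ (fun q => β q a j) p (Y b p)) • X j p)) := by
    have hDY : ∀ (c j : Fin k), fderiv ℝ (X j) p (Y c p)
        = ∑ i, β p c i • fderiv ℝ (X j) p (X i p) := by
      intro c j
      rw [hY]
      rw [map_sum]
      simp [map_smul]
    show fderiv ℝ (Y b) p (Y a p) - fderiv ℝ (Y a) p (Y b p) = _
    rw [(hYd a).fderiv, (hYd b).fderiv]
    simp only [ContinuousLinearMap.sum_apply, ContinuousLinearMap.add_apply,
      ContinuousLinearMap.smul_apply, ContinuousLinearMap.smulRight_apply,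
      Finset.sum_add_distrib, hDY, lieBracketVF]
    simp only [Finset.smul_sum, smul_smul, smul_sub, Finset.sum_sub_distrib]
    rw [Finset.sum_comm (s := Finset.univ) (t := Finset.univ)
      (f := fun j i => (β p b j * β p a i) • fderiv ℝ (X j) p (X i p))]
    simp only [mul_comm]
    abel
  have hmemX : lieBracketVF (Y a) (Y b) p ∈
      Submodule.span ℝ (Set.range fun l => X l p) := by
    rw [hbr]
    refine Submodule.add_mem _
      (Submodule.sum_mem _ fun i _ => Submodule.sum_mem _ fun j _ =>
        Submodule.smul_mem _ _ (hinvol i j p hp))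
      (Submodule.sub_mem _ ?_ ?_) <;>
    exact Submodule.sum_mem _ fun j _ =>
      Submodule.smul_mem _ _ (Submodule.subset_span ⟨j, rfl⟩)
  obtain ⟨c, hc⟩ := (Submodule.mem_span_range_iff_exists_fun ℝ).mp hmemX
  have hcl : ∀ l : Fin k, (∑ i, c i * X i p (Fin.castLE hk l)) = 0 := by
    intro l
    have := congrFun hc (Fin.castLE hk l)
    simp only [Finset.sum_apply, Pi.smul_apply, smul_eq_mul] at this
    rw [this, hzero l]
  have hc0 : c = 0 := by
    have hv : Matrix.vecMul c (Matrix.of fun i j => X i p (Fin.castLE hk j)) = 0 := by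
      funext l
      simpa [Matrix.vecMul, dotProduct] using hcl l
    have h4 := congrArg (fun v => Matrix.vecMul v (Matrix.of (β p))) hv
    simpa [Matrix.vecMul_vecMul, hαβ p hp] using h4
  rw [← hc, hc0]
  simp
end

section
/- Let f : U → ℂ be holomorphic on a connected open set U ⊆ ℂⁿ with U ∩ ℝⁿ ≠ ∅, and suppose f vanishes on U ∩ ℝⁿ. Then f ≡ 0 on U. -/
open Set Metric Filter Topology

/-- A holomorphic function on a connected open set `U ⊆ ℂⁿ` meeting `ℝⁿ`
(the points with all coordinates real) that vanishes on `U ∩ ℝⁿ` vanishes identically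
on `U`. -/
theorem vanishing_on_real_points {n : ℕ}
    (U : Set (Fin n → ℂ)) (hU : IsOpen U) (hUc : IsConnected U)
    (hne : (U ∩ {z : Fin n → ℂ | ∀ i, (z i).im = 0}).Nonempty)
    (f : (Fin n → ℂ) → ℂ) (hf : DifferentiableOn ℂ f U)
    (hvan : ∀ z ∈ U ∩ {z : Fin n → ℂ | ∀ i, (z i).im = 0}, f z = 0) :
    Set.EqOn f 0 U := by
  classical
  obtain ⟨p, hpU, hpR⟩ := hne
  obtain ⟨r, hr, hball⟩ := Metric.isOpen_iff.1 hU p hpU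
  -- Step 1: f vanishes on the ball around the real point p
  have key : ∀ k : ℕ, ∀ z ∈ ball p r, (∀ i : Fin n, k ≤ (i : ℕ) → (z i).im = 0) → f z = 0 := by
    intro k
    induction k with
    | zero =>
      intro z hz him
      exact hvan z ⟨hball hz, fun i => him i (Nat.zero_le _)⟩
    | succ k IH =>
      intro z hz him
      by_cases hk : k < n
      · set kk : Fin n := ⟨k, hk⟩ with hkk
        set φ : ℂ → (Fin n → ℂ) := fun w => z + (w - z kk) • (Pi.single kk 1 : Fin n → ℂ) with hφ
        have hφk : ∀ w, φ w kk = w := by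
          intro w
          simp only [hφ, Pi.add_apply, Pi.smul_apply, Pi.single_eq_same, smul_eq_mul]
          ring
        have hφi : ∀ w, ∀ i : Fin n, i ≠ kk → φ w i = z i := by
          intro w i hi
          simp [hφ, Pi.single_eq_of_ne hi]
        have hφmem : ∀ w ∈ ball (p kk) r, φ w ∈ ball p r := by
          intro w hw
          rw [mem_ball, dist_pi_lt_iff hr]
          intro i
          by_cases hi : i = kk
          · subst hi; rw [hφk]; exact hw
          · rw [hφi w i hi]
            exact lt_of_le_of_lt (dist_le_pi_dist z p i) hz
        have hφd : Differentiable ℂ φ :=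
          ((differentiable_id.sub_const _).smul_const _).const_add _
        have hgd : DifferentiableOn ℂ (f ∘ φ) (ball (p kk) r) :=
          DifferentiableOn.comp (hf.mono hball) hφd.differentiableOn
            (fun w hw => hφmem w hw)
        have hga : AnalyticOnNhd ℂ (f ∘ φ) (ball (p kk) r) :=
          hgd.analyticOnNhd isOpen_ball
        -- vanishing on real points of the disc
        have hzero : ∀ w : ℂ, w.im = 0 → w ∈ ball (p kk) r → (f ∘ φ) w = 0 := by
          intro w hwim hw
          refine IH (φ w) (hφmem w hw) ?_
          intro i hi
          by_cases hik : i = kk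
          · subst hik; rw [hφk]; exact hwim
          · rw [hφi w i hik]
            refine him i ?_
            have h1 : (i : ℕ) ≠ k := fun h => hik (Fin.ext h)
            omega
        have hpk : (p kk) ∈ ball (p kk) r := mem_ball_self hr
        have hcl : (p kk) ∈ closure ({w : ℂ | (f ∘ φ) w = 0} \ {p kk}) := by
          rw [Metric.mem_closure_iff]
          intro ε hε
          set δ : ℝ := min ε r / 2 with hδ
          have hδ0 : 0 < δ := by positivity
          have hdist : dist (p kk + (δ : ℂ)) (p kk) = δ := by
            have he : (p kk + (δ : ℂ)) - p kk = (δ : ℂ) := by ring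
            rw [dist_eq_norm, he]
            simpa using abs_of_pos hδ0
          refine ⟨p kk + (δ : ℂ), ⟨?_, ?_⟩, ?_⟩
          · refine hzero _ ?_ ?_
            · simp [Complex.add_im, hpR kk]
            · rw [mem_ball, hdist]
              have : δ < r := by
                have := min_le_right ε r; linarith
              exact this
          · simp only [Set.mem_singleton_iff]
            intro h
            have h2 : (δ : ℂ) = 0 := by
              have := add_eq_left.1 h
              exact this
            rw [Complex.ofReal_eq_zero] at h2
            linarith
          · rw [dist_comm, hdist]
            have := min_le_left ε r; linarith
        have heq : EqOn (f ∘ φ) 0 (ball (p kk) r) :=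
          hga.eqOn_zero_of_preconnected_of_mem_closure (convex_ball _ _).isPreconnected hpk hcl
        have hzk : z kk ∈ ball (p kk) r :=
          lt_of_le_of_lt (dist_le_pi_dist z p kk) hz
        have hz0 := heq hzk
        have hφz : φ (z kk) = z := by
          simp [hφ]
        simpa [Function.comp, hφz] using hz0
      · refine IH z hz ?_
        intro i hi
        exact absurd i.isLt (by omega)
  -- Step 2: propagate by connectedness
  set W : Set (Fin n → ℂ) := {z | ∀ᶠ w in 𝓝 z, f w = 0} with hW
  have hWopen : IsOpen W := isOpen_setOf_eventually_nhds
  have hpW : p ∈ W := by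
    rw [hW, Set.mem_setOf_eq, _root_.eventually_nhds_iff]
    exact ⟨ball p r, fun w hw => key n w hw (fun i hi => absurd i.isLt (by omega)),
      isOpen_ball, mem_ball_self hr⟩
  have hclosed : closure W ∩ U ⊆ W := by
    rintro z ⟨hzc, hzU⟩
    obtain ⟨s, hs, hsU⟩ := Metric.isOpen_iff.1 hU z hzU
    obtain ⟨w, hwW, hwz⟩ := Metric.mem_closure_iff.1 hzc s hs
    -- f vanishes on ball z s
    have hbz : ∀ q ∈ ball z s, f q = 0 := by
      intro q hq
      set ψ : ℂ → (Fin n → ℂ) := fun l => w + l • (q - w) with hψ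
      set D : Set ℂ := ψ ⁻¹' (ball z s) with hD
      have hψd : Differentiable ℂ ψ := (differentiable_id.smul_const _).const_add _
      have hDopen : IsOpen D := isOpen_ball.preimage hψd.continuous
      have hDconv : Convex ℝ D := by
        intro x hx y hy a b ha hb hab
        have hab' : (a : ℂ) + (b : ℂ) = 1 := by exact_mod_cast hab
        have hid : ψ (a • x + b • y) = a • ψ x + b • ψ y := by
          funext i
          simp only [hψ, Pi.add_apply, Pi.smul_apply, Pi.sub_apply, smul_eq_mul,
            Complex.real_smul]
          linear_combination (-(w i)) * hab'
        show ψ (a • x + b • y) ∈ ball z s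
        rw [hid]
        exact convex_ball z s hx hy ha hb hab
      have hgd : DifferentiableOn ℂ (f ∘ ψ) D :=
        DifferentiableOn.comp (hf.mono hsU) hψd.differentiableOn (fun l hl => hl)
      have hga : AnalyticOnNhd ℂ (f ∘ ψ) D := hgd.analyticOnNhd hDopen
      have hψ0 : ψ 0 = w := by simp [hψ]
      have hψ1 : ψ 1 = q := by simp [hψ]
      have h0D : (0 : ℂ) ∈ D := by
        rw [hD, Set.mem_preimage, hψ0, mem_ball]
        rw [dist_comm]; exact hwz
      have h1D : (1 : ℂ) ∈ D := by
        rw [hD, Set.mem_preimage, hψ1]; exact hq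
      have hev : (f ∘ ψ) =ᶠ[𝓝 (0 : ℂ)] 0 := by
        have hc : ContinuousAt ψ 0 := hψd.continuous.continuousAt
        have : {y | f y = 0} ∈ 𝓝 (ψ 0) := by rw [hψ0]; exact hwW
        have h2 := hc.preimage_mem_nhds this
        filter_upwards [h2] with l hl
        exact hl
      have heq : EqOn (f ∘ ψ) 0 D :=
        hga.eqOn_zero_of_preconnected_of_eventuallyEq_zero hDconv.isPreconnected h0D hev
      have := heq h1D
      simpa [Function.comp, hψ1] using this
    rw [hW, Set.mem_setOf_eq, _root_.eventually_nhds_iff]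
    exact ⟨ball z s, hbz, isOpen_ball, mem_ball_self hs⟩
  have hsub : U ⊆ W :=
    hUc.isPreconnected.subset_of_closure_inter_subset hWopen ⟨p, hpU, hpW⟩ hclosed
  intro z hz
  exact (hsub hz).self_of_nhds
end
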